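/- arXiv:1907.10536 — 6 statements merged into one kernel-verified Lean document; each statement's English description precedes it below -/
import Mathlib

section
/- Let x be a solution trajectory of (DIN-AVD)_{α,β,b} with α ≥ 1. Suppose the growth conditions (G2): b(t) > β'(t) + β(t)/t for all t ≥ t₀, and (G3): t·w'(t) ≤ (α−3)·w(t) for all t ≥ t₀ hold, where w(t) := b(t) − β'(t) − β(t)/t. Then w(t) is positive and there exists a constant C > 0 such that f(x(t)) − min_H f ≤ C/(t² w(t)) for all t ≥ t₀. -/
open Set InnerProductSpace

/-! Lyapunov argument. For the anchor `v(t) = (α - 1)(x(t) - x⋆) + t ẋ(t) + t β(t) ∇f(x(t))`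
the equation gives `v̇ = -t w(t) ∇f(x(t))`. Hence for
`E(t) = t² w(t) (f(x(t)) - f(x⋆)) + ‖v(t)‖² / 2` the gradient inequality of convexity and
(G3) give `Ė ≤ t (f(x) - f(x⋆)) (t ẇ - (α - 3) w) ≤ 0`,
so `t² w(t) (f(x(t)) - f(x⋆)) ≤ E(t) ≤ E(t₀)`. -/

theorem ConvexOn.apply_sub_le_sub_of_hasFDerivAt {E : Type*} [NormedAddCommGroup E]
    [NormedSpace ℝ E] {s : Set E} {f : E → ℝ} {f' : E →L[ℝ] ℝ} {p q : E} (hf : ConvexOn ℝ s f)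
    (hp : p ∈ s) (hq : q ∈ s) (hf' : HasFDerivAt f f' p) : f' (q - p) ≤ f q - f p := by
  have hline : HasDerivAt (f ∘ AffineMap.lineMap (k := ℝ) p q) (f' (q - p)) 0 := by
    have hf0 : HasFDerivAt f f' (AffineMap.lineMap (k := ℝ) p q (0 : ℝ)) := by simpa using hf'
    exact hf0.comp_hasDerivAt 0 AffineMap.hasDerivAt_lineMap
  simpa [slope_def_field] using
    (hf.comp_affineMap (AffineMap.lineMap (k := ℝ) p q)).le_slope_of_hasDerivAt
      (by simpa using hp) (by simpa using hq) one_pos hline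

theorem ConvexOn.sub_le_inner_gradient {H : Type*} [NormedAddCommGroup H] [InnerProductSpace ℝ H]
    [CompleteSpace H] {f : H → ℝ} (hf : ConvexOn ℝ univ f) {p : H} (hfp : DifferentiableAt ℝ f p)
    (q : H) : f p - f q ≤ ⟪gradient f p, p - q⟫_ℝ := by
  have := hf.apply_sub_le_sub_of_hasFDerivAt (mem_univ p) (mem_univ q) hfp.hasFDerivAt
  rw [← inner_gradient_left, ← neg_sub p q, inner_neg_right] at this
  linarith

theorem ContDiff.differentiable_gradient {H : Type*} [NormedAddCommGroup H]
    [InnerProductSpace ℝ H] [CompleteSpace H] {f : H → ℝ} (hf : ContDiff ℝ 2 f) :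
    Differentiable ℝ (gradient f) := by
  have hf' : ContDiff ℝ 1 (fderiv ℝ f) := hf.fderiv_right (by norm_num)
  exact ((toDual ℝ H).symm.contDiff.comp hf').differentiable one_ne_zero

theorem antitoneOn_Ici_of_hasDerivAt_nonpos {E : ℝ → ℝ} {t₀ : ℝ}
    (hE : ∀ t ≥ t₀, ∃ e ≤ 0, HasDerivAt E e t) : AntitoneOn E (Ici t₀) := by
  choose e he hEe using hE
  refine antitoneOn_of_deriv_nonpos (convex_Ici t₀)
    (fun t ht ↦ (hEe t ht).continuousAt.continuousWithinAt) (fun t ht ↦ ?_) (fun t ht ↦ ?_) <;>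
    rw [interior_Ici] at ht
  · exact (hEe t ht.le).differentiableAt.differentiableWithinAt
  · exact (hEe t ht.le).deriv ▸ he t ht.le

section Lyapunov

variable {H : Type*} [NormedAddCommGroup H] [InnerProductSpace ℝ H]

noncomputable def dinavdAnchor (α : ℝ) (β : ℝ → ℝ) (xstar : H) (x x' g : ℝ → H) (t : ℝ) : H :=
  (α - 1) • (x t - xstar) + t • x' t + (t * β t) • g t

noncomputable def dinavdEnergy (α : ℝ) (β w φ : ℝ → ℝ) (xstar : H) (x x' g : ℝ → H) (t : ℝ) : ℝ :=
  t ^ 2 * w t * φ t + ‖dinavdAnchor α β xstar x x' g t‖ ^ 2 / 2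

variable {α t : ℝ} {β w φ : ℝ → ℝ} {xstar : H} {x x' g : ℝ → H}

theorem hasDerivAt_dinavdAnchor {dβ c : ℝ} {a dg : H} (ht : t ≠ 0)
    (hβ : HasDerivAt β dβ t) (hx : HasDerivAt x (x' t) t) (hx' : HasDerivAt x' a t)
    (hg : HasDerivAt g dg t) (hode : a + (α / t) • x' t + β t • dg + c • g t = 0) :
    HasDerivAt (dinavdAnchor α β xstar x x' g) (-(t * (c - dβ - β t / t)) • g t) t := by
  have h := (((hx.sub_const xstar).const_smul (α - 1)).add ((hasDerivAt_id' t).smul hx')).add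
    (((hasDerivAt_id' t).mul hβ).smul hg)
  refine h.congr_deriv ?_
  rw [show a = -((α / t) • x' t) - β t • dg - c • g t by linear_combination (norm := module) hode]
  simp only [Pi.mul_apply]
  match_scalars <;> field_simp <;> ring

theorem sq_mul_mul_le_dinavdEnergy :
    t ^ 2 * w t * φ t ≤ dinavdEnergy α β w φ xstar x x' g t :=
  le_add_of_nonneg_right (by positivity)

theorem exists_hasDerivAt_dinavdEnergy_nonpos {dw : ℝ} (ht : 0 < t) (hα : 1 ≤ α)
    (hw : 0 < w t) (hβ : 0 ≤ β t) (hdw : t * dw ≤ (α - 3) * w t) (hφ : 0 ≤ φ t)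
    (hφg : φ t ≤ ⟪g t, x t - xstar⟫_ℝ) (hwd : HasDerivAt w dw t)
    (hφd : HasDerivAt φ ⟪g t, x' t⟫_ℝ t)
    (hv : HasDerivAt (dinavdAnchor α β xstar x x' g) (-(t * w t) • g t) t) :
    ∃ e ≤ 0, HasDerivAt (dinavdEnergy α β w φ xstar x x' g) e t := by
  set v := dinavdAnchor α β xstar x x' g
  have hvg : ⟪v t, g t⟫_ℝ =
      (α - 1) * ⟪g t, x t - xstar⟫_ℝ + t * ⟪g t, x' t⟫_ℝ + t * β t * ‖g t‖ ^ 2 := by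
    rw [real_inner_comm]
    simp only [v, dinavdAnchor, inner_add_right, real_inner_smul_right, real_inner_self_eq_norm_sq]
  refine ⟨(2 * t * w t + t ^ 2 * dw) * φ t + t ^ 2 * w t * ⟪g t, x' t⟫_ℝ - t * w t * ⟪v t, g t⟫_ℝ,
    ?_, ?_⟩
  · rw [hvg]
    have hconv := mul_le_mul_of_nonneg_left hφg (by positivity : 0 ≤ t * w t * (α - 1))
    have hG3 := mul_le_mul_of_nonneg_right (mul_le_mul_of_nonneg_left hdw ht.le) hφ
    have hdamp : 0 ≤ t ^ 2 * w t * β t * ‖g t‖ ^ 2 := by positivity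
    nlinarith
  · have hsq := (hv.inner ℝ hv).div_const 2
    simp only [real_inner_self_eq_norm_sq] at hsq
    refine ((((hasDerivAt_pow 2 t).mul hwd).mul hφd).add hsq).congr_deriv ?_
    simp only [Pi.mul_apply, real_inner_smul_right, real_inner_comm (v t)]
    ring

end Lyapunov

theorem dinavd_value_convergence_rate_general
    {H : Type*} [NormedAddCommGroup H] [InnerProductSpace ℝ H] [CompleteSpace H]
    (f : H → ℝ) (hf : ContDiff ℝ 2 f) (hconv : ConvexOn ℝ Set.univ f)
    (xstar : H) (hmin : ∀ y, f xstar ≤ f y)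
    (t₀ : ℝ) (ht₀ : 0 < t₀)
    (α : ℝ) (hα : 1 ≤ α)
    (β b β' w w' : ℝ → ℝ)
    (hβnn : ∀ t ≥ t₀, 0 ≤ β t)
    (hβ' : ∀ t ≥ t₀, HasDerivAt β (β' t) t)
    (hw : ∀ t ≥ t₀, w t = b t - β' t - β t / t)
    (hw' : ∀ t ≥ t₀, HasDerivAt w (w' t) t)
    (x x' x'' : ℝ → H)
    (hx' : ∀ t ≥ t₀, HasDerivAt x (x' t) t)
    (hx'' : ∀ t ≥ t₀, HasDerivAt x' (x'' t) t)
    (hode : ∀ t ≥ t₀,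
      x'' t + (α / t) • x' t + β t • (fderiv ℝ (gradient f) (x t)) (x' t)
        + b t • gradient f (x t) = 0)
    (hG2 : ∀ t ≥ t₀, β' t + β t / t < b t)
    (hG3 : ∀ t ≥ t₀, t * w' t ≤ (α - 3) * w t) :
    (∀ t ≥ t₀, 0 < w t) ∧
      ∃ C > 0, ∀ t ≥ t₀, f (x t) - f xstar ≤ C / (t ^ 2 * w t) := by
  have hwpos : ∀ t ≥ t₀, 0 < w t := fun t ht ↦ by linarith [hw t ht, hG2 t ht]
  refine ⟨hwpos, ?_⟩
  have hfd : Differentiable ℝ f := hf.differentiable two_ne_zero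
  set g : ℝ → H := fun t ↦ gradient f (x t)
  set E := dinavdEnergy α β w (fun t ↦ f (x t) - f xstar) xstar x x' g
  have hE : AntitoneOn E (Ici t₀) := antitoneOn_Ici_of_hasDerivAt_nonpos fun t ht ↦ by
    have ht0 : 0 < t := ht₀.trans_le ht
    have hv := hasDerivAt_dinavdAnchor (xstar := xstar) ht0.ne' (hβ' t ht) (hx' t ht) (hx'' t ht)
      ((hf.differentiable_gradient (x t)).hasFDerivAt.comp_hasDerivAt t (hx' t ht)) (hode t ht)
    rw [← hw t ht] at hv
    refine exists_hasDerivAt_dinavdEnergy_nonpos ht0 hα (hwpos t ht) (hβnn t ht) (hG3 t ht)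
      (sub_nonneg.2 (hmin _)) (hconv.sub_le_inner_gradient (hfd _) xstar) (hw' t ht) ?_ hv
    simpa [← inner_gradient_left] using
      ((hfd (x t)).hasFDerivAt.comp_hasDerivAt t (hx' t ht)).sub_const (f xstar)
  have hbound : ∀ t ≥ t₀, t ^ 2 * w t * (f (x t) - f xstar) ≤ E t₀ := fun t ht ↦
    sq_mul_mul_le_dinavdEnergy.trans (hE self_mem_Ici ht ht)
  have hE₀ : 0 ≤ E t₀ := (mul_nonneg (mul_nonneg (sq_nonneg t₀) (hwpos t₀ le_rfl).le)
    (sub_nonneg.2 (hmin _))).trans (hbound t₀ le_rfl)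
  refine ⟨E t₀ + 1, by positivity, fun t ht ↦ ?_⟩
  rw [le_div_iff₀' (mul_pos (pow_pos (ht₀.trans_le ht) 2) (hwpos t ht))]
  linarith [hbound t ht]

/-- Theorem 2.1 (i): convergence rate of the values for (DIN-AVD)_{α,β,b}. -/
theorem dinavd_value_convergence_rate
    {H : Type*} [NormedAddCommGroup H] [InnerProductSpace ℝ H] [CompleteSpace H]
    (f : H → ℝ) (hf : ContDiff ℝ 2 f) (hconv : ConvexOn ℝ Set.univ f)
    (xstar : H) (hmin : ∀ y, f xstar ≤ f y)
    (t₀ : ℝ) (ht₀ : 0 < t₀)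
    (α : ℝ) (hα : 1 ≤ α)
    (β b β' b' w w' : ℝ → ℝ)
    (hβnn : ∀ t ≥ t₀, 0 ≤ β t) (hbnn : ∀ t ≥ t₀, 0 ≤ b t)
    (hβ' : ∀ t ≥ t₀, HasDerivAt β (β' t) t)
    (hb' : ∀ t ≥ t₀, HasDerivAt b (b' t) t)
    (hw : ∀ t ≥ t₀, w t = b t - β' t - β t / t)
    (hw' : ∀ t ≥ t₀, HasDerivAt w (w' t) t)
    (x x' x'' : ℝ → H)
    (hx' : ∀ t ≥ t₀, HasDerivAt x (x' t) t)
    (hx'' : ∀ t ≥ t₀, HasDerivAt x' (x'' t) t)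
    (hx''cont : ContinuousOn x'' (Set.Ici t₀))
    (hode : ∀ t ≥ t₀,
      x'' t + (α / t) • x' t + β t • (fderiv ℝ (gradient f) (x t)) (x' t)
        + b t • gradient f (x t) = 0)
    (hG2 : ∀ t ≥ t₀, β' t + β t / t < b t)
    (hG3 : ∀ t ≥ t₀, t * w' t ≤ (α - 3) * w t) :
    (∀ t ≥ t₀, 0 < w t) ∧
      ∃ C > 0, ∀ t ≥ t₀, f (x t) - f xstar ≤ C / (t ^ 2 * w t) :=
  dinavd_value_convergence_rate_general f hf hconv xstar hmin t₀ ht₀ α hα β b β' w w' hβnn hβ' hw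
    hw' x x' x'' hx' hx'' hode hG2 hG3
end

section
/- Let x be a solution trajectory of (DIN-AVD)_{α,β,b} with α ≥ 1, and suppose the growth condition (G2): b(t) > β'(t) + β(t)/t holds for all t ≥ t₀, where w(t) := b(t) − β'(t) − β(t)/t. Fix x* ∈ argmin f and define the energy E(t) := t²w(t)·(f(x(t)) − f(x*)) + (1/2)‖v(t)‖², where v(t) := (α−1)(x(t) − x*) + t·(ẋ(t) + β(t)∇f(x(t))). Then for every t ≥ t₀, E'(t) + β(t)·t²w(t)·‖∇f(x(t))‖² + t·((α−3)w(t) − t·w'(t))·(f(x(t)) − f(x*)) ≤ 0. -/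
/-!
Differentiating `v` along the trajectory and substituting the equation, the Hessian and velocity
terms cancel and `v' = -t w ∇f(x)`. Hence
`E' = (2tw + t²w')(f(x) - f(x*)) - tw((α - 1)⟪∇f(x), x - x*⟫ + tβ‖∇f(x)‖²)`, so the quantity in
question equals `(α - 1) t w (f(x) - f(x*) - ⟪∇f(x), x - x*⟫)`. This is `≤ 0` because `α ≥ 1`,
`w > 0` by (G2), and `f(x) - f(x*) ≤ ⟪∇f(x), x - x*⟫` by convexity.
-/

open Set

open scoped RealInnerProductSpace

section

variable {H : Type*} [NormedAddCommGroup H] [InnerProductSpace ℝ H] [CompleteSpace H]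

theorem ContDiff.gradient {f : H → ℝ} {m n : WithTop ℕ∞} (hf : ContDiff ℝ n f)
    (hmn : m + 1 ≤ n) : ContDiff ℝ m (gradient f) :=
  (InnerProductSpace.toDual ℝ H).symm.contDiff.comp (hf.fderiv_right hmn)

theorem ConvexOn.sub_le_inner_of_hasGradientAt {s : Set H} {f : H → ℝ} {g p q : H}
    (hconv : ConvexOn ℝ s f) (hp : p ∈ s) (hq : q ∈ s) (hg : HasGradientAt f g p) :
    f p - f q ≤ ⟪g, p - q⟫ := by
  have hline : HasDerivAt (f ∘ AffineMap.lineMap (k := ℝ) p q) ⟪g, q - p⟫ 0 :=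
    hg.hasFDerivAt.comp_hasDerivAt_of_eq 0 AffineMap.hasDerivAt_lineMap
      (AffineMap.lineMap_apply_zero p q).symm
  have hslope := (hconv.comp_affineMap (AffineMap.lineMap (k := ℝ) p q)).le_slope_of_hasDerivAt
    (by simpa using hp) (by simpa using hq) one_pos hline
  have hneg : ⟪g, p - q⟫ = -⟪g, q - p⟫ := by rw [← inner_neg_right, neg_sub]
  simp only [slope, Function.comp_apply, AffineMap.lineMap_apply_zero,
    AffineMap.lineMap_apply_one, sub_zero, inv_one, one_smul, vsub_eq_sub] at hslope
  linarith

noncomputable def lyapunovVector (f : H → ℝ) (α : ℝ) (β : ℝ → ℝ) (x x' : ℝ → H) (xstar : H)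
    (s : ℝ) : H :=
  (α - 1) • (x s - xstar) + s • (x' s + β s • gradient f (x s))

noncomputable def lyapunovEnergy (f : H → ℝ) (α : ℝ) (β w : ℝ → ℝ) (x x' : ℝ → H) (xstar : H)
    (s : ℝ) : ℝ :=
  s ^ 2 * w s * (f (x s) - f xstar) + (1 / 2) * ‖lyapunovVector f α β x x' xstar s‖ ^ 2

variable {f : H → ℝ} {α t : ℝ} {β β' b w w' : ℝ → ℝ} {x x' x'' : ℝ → H} {xstar : H}

/-- Differentiating `s β(s) ∇f(x(s))` produces `t β ∇²f(x) ẋ`, which cancels the Hessian term of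
the equation. -/
theorem hasDerivAt_lyapunovVector (ht : t ≠ 0)
    (hgrad : DifferentiableAt ℝ (gradient f) (x t))
    (hx' : HasDerivAt x (x' t) t) (hx'' : HasDerivAt x' (x'' t) t)
    (hβ' : HasDerivAt β (β' t) t)
    (hode : x'' t + (α / t) • x' t + β t • (fderiv ℝ (gradient f) (x t)) (x' t)
        + b t • gradient f (x t) = 0) :
    HasDerivAt (lyapunovVector f α β x x' xstar)
      ((-(t * (b t - β' t - β t / t))) • gradient f (x t)) t := by
  set g := gradient f (x t)
  set A := fderiv ℝ (gradient f) (x t) (x' t)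
  have hgx : HasDerivAt (fun s => gradient f (x s)) A t :=
    hgrad.hasFDerivAt.comp_hasDerivAt t hx'
  have hv : HasDerivAt (lyapunovVector f α β x x' xstar)
      ((α - 1) • x' t + (t • (x'' t + (β t • A + β' t • g)) + (1 : ℝ) • (x' t + β t • g))) t :=
    ((hx'.sub_const xstar).const_smul (α - 1)).add
      ((hasDerivAt_id t).smul (hx''.add (hβ'.smul hgx)))
  have hx''_eq : x'' t = -((α / t) • x' t + β t • A + b t • g) :=
    eq_neg_of_add_eq_zero_left (by rw [← hode]; abel)
  convert hv using 1
  rw [hx''_eq]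
  match_scalars <;> field_simp <;> ring

theorem hasDerivAt_lyapunovEnergy (ht : t ≠ 0)
    (hfx : DifferentiableAt ℝ f (x t)) (hgrad : DifferentiableAt ℝ (gradient f) (x t))
    (hx' : HasDerivAt x (x' t) t) (hx'' : HasDerivAt x' (x'' t) t)
    (hβ' : HasDerivAt β (β' t) t) (hw' : HasDerivAt w (w' t) t)
    (hw : w t = b t - β' t - β t / t)
    (hode : x'' t + (α / t) • x' t + β t • (fderiv ℝ (gradient f) (x t)) (x' t)
        + b t • gradient f (x t) = 0) :
    HasDerivAt (lyapunovEnergy f α β w x x' xstar)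
      ((2 * t * w t + t ^ 2 * w' t) * (f (x t) - f xstar)
        - t * w t * ((α - 1) * ⟪gradient f (x t), x t - xstar⟫
          + t * β t * ‖gradient f (x t)‖ ^ 2)) t := by
  have hv := hasDerivAt_lyapunovVector (xstar := xstar) ht hgrad hx' hx'' hβ' hode
  rw [← hw] at hv
  have hfx_t : HasDerivAt (fun s => f (x s)) ⟪gradient f (x t), x' t⟫ t :=
    hfx.hasGradientAt.hasFDerivAt.comp_hasDerivAt t hx'
  refine ((((hasDerivAt_pow 2 t).mul hw').mul (hfx_t.sub_const (f xstar))).add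
    (hv.norm_sq.const_mul (1 / 2))).congr_deriv ?_
  rw [real_inner_smul_right, real_inner_comm (gradient f (x t))]
  simp only [lyapunovVector, Pi.mul_apply, inner_add_right, real_inner_smul_right,
    real_inner_self_eq_norm_sq]
  push_cast
  ring

end

theorem dinavd_energy_decay_general
    {H : Type*} [NormedAddCommGroup H] [InnerProductSpace ℝ H] [CompleteSpace H]
    (f : H → ℝ) (hf : ContDiff ℝ 2 f) (hconv : ConvexOn ℝ Set.univ f)
    (xstar : H)
    (t₀ : ℝ) (ht₀ : 0 < t₀)
    (α : ℝ) (hα : 1 ≤ α)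
    (β b β' w w' : ℝ → ℝ)
    (hβ' : ∀ t ≥ t₀, HasDerivAt β (β' t) t)
    (hw : ∀ t ≥ t₀, w t = b t - β' t - β t / t)
    (hw' : ∀ t ≥ t₀, HasDerivAt w (w' t) t)
    (x x' x'' : ℝ → H)
    (hx' : ∀ t ≥ t₀, HasDerivAt x (x' t) t)
    (hx'' : ∀ t ≥ t₀, HasDerivAt x' (x'' t) t)
    (hode : ∀ t ≥ t₀,
      x'' t + (α / t) • x' t + β t • (fderiv ℝ (gradient f) (x t)) (x' t)
        + b t • gradient f (x t) = 0)
    (hG2 : ∀ t ≥ t₀, β' t + β t / t < b t) :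
    ∀ t ≥ t₀, ∀ d : ℝ,
      HasDerivAt
        (fun s => s ^ 2 * w s * (f (x s) - f xstar) +
          (1 / 2) * ‖(α - 1) • (x s - xstar) +
            s • (x' s + β s • gradient f (x s))‖ ^ 2) d t →
      d + β t * (t ^ 2 * w t) * ‖gradient f (x t)‖ ^ 2
        + t * ((α - 3) * w t - t * w' t) * (f (x t) - f xstar) ≤ 0 := by
  intro t ht d hd
  have htpos : 0 < t := ht₀.trans_le ht
  have hwpos : 0 < w t := by linarith [hw t ht, hG2 t ht]
  have hfd : Differentiable ℝ f := hf.differentiable two_ne_zero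
  have hgd : Differentiable ℝ (gradient f) :=
    (hf.gradient (m := 1) le_rfl).differentiable one_ne_zero
  have hd_eq := hd.unique <| hasDerivAt_lyapunovEnergy htpos.ne' (hfd (x t)) (hgd (x t))
    (hx' t ht) (hx'' t ht) (hβ' t ht) (hw' t ht) (hw t ht) (hode t ht)
  have hcvx := hconv.sub_le_inner_of_hasGradientAt (mem_univ _) (mem_univ xstar)
    (hfd (x t)).hasGradientAt
  calc d + β t * (t ^ 2 * w t) * ‖gradient f (x t)‖ ^ 2
        + t * ((α - 3) * w t - t * w' t) * (f (x t) - f xstar)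
      = (α - 1) * (t * w t) * (f (x t) - f xstar - ⟪gradient f (x t), x t - xstar⟫) := by
        rw [hd_eq]; ring
    _ ≤ 0 := mul_nonpos_of_nonneg_of_nonpos (by positivity) (by linarith)

/-- Lyapunov energy decay inequality for (DIN-AVD)_{α,β,b}. -/
theorem dinavd_energy_decay
    {H : Type*} [NormedAddCommGroup H] [InnerProductSpace ℝ H] [CompleteSpace H]
    (f : H → ℝ) (hf : ContDiff ℝ 2 f) (hconv : ConvexOn ℝ Set.univ f)
    (xstar : H) (hmin : ∀ y, f xstar ≤ f y)
    (t₀ : ℝ) (ht₀ : 0 < t₀)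
    (α : ℝ) (hα : 1 ≤ α)
    (β b β' b' w w' : ℝ → ℝ)
    (hβnn : ∀ t ≥ t₀, 0 ≤ β t) (hbnn : ∀ t ≥ t₀, 0 ≤ b t)
    (hβ' : ∀ t ≥ t₀, HasDerivAt β (β' t) t)
    (hb' : ∀ t ≥ t₀, HasDerivAt b (b' t) t)
    (hw : ∀ t ≥ t₀, w t = b t - β' t - β t / t)
    (hw' : ∀ t ≥ t₀, HasDerivAt w (w' t) t)
    (x x' x'' : ℝ → H)
    (hx' : ∀ t ≥ t₀, HasDerivAt x (x' t) t)
    (hx'' : ∀ t ≥ t₀, HasDerivAt x' (x'' t) t)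
    (hx''cont : ContinuousOn x'' (Set.Ici t₀))
    (hode : ∀ t ≥ t₀,
      x'' t + (α / t) • x' t + β t • (fderiv ℝ (gradient f) (x t)) (x' t)
        + b t • gradient f (x t) = 0)
    (hG2 : ∀ t ≥ t₀, β' t + β t / t < b t) :
    ∀ t ≥ t₀, ∀ d : ℝ,
      HasDerivAt
        (fun s => s ^ 2 * w s * (f (x s) - f xstar) +
          (1 / 2) * ‖(α - 1) • (x s - xstar) +
            s • (x' s + β s • gradient f (x s))‖ ^ 2) d t →
      d + β t * (t ^ 2 * w t) * ‖gradient f (x t)‖ ^ 2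
        + t * ((α - 3) * w t - t * w' t) * (f (x t) - f xstar) ≤ 0 :=
  dinavd_energy_decay_general f hf hconv xstar t₀ ht₀ α hα β b β' w w' hβ' hw hw' x x' x'' hx' hx''
    hode hG2
end

section
/- Let α ≥ 1, let b : [t₀,∞) → (0,∞) be of class C¹ with t·b'(t) ≤ (α−3)·b(t) for all t ≥ t₀, and let x : [t₀,∞) → H be a twice continuously differentiable solution of ẍ(t) + (α/t)ẋ(t) + b(t)·∇f(x(t)) = 0. Then there exists a constant C > 0 such that f(x(t)) − min_H f ≤ C/(t² b(t)) for all t ≥ t₀. -/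
/-!
Lyapunov argument: along a solution, the energy
`E t = t² b t (f (x t) - f x⋆) + ‖(α - 1) (x t - x⋆) + t ẋ t‖² / 2`
has derivative `(2 t b + t² b') (f x - f x⋆) - (α - 1) t b ⟪x - x⋆, ∇f x⟫`, because the ODE turns
the derivative of `(α - 1) (x - x⋆) + t ẋ` into `-t b ∇f x`. The growth condition on `b` gives
`2 t b + t² b' ≤ (α - 1) t b`, and convexity gives `f x - f x⋆ ≤ ⟪x - x⋆, ∇f x⟫`, so `E` is
nonincreasing and `t² b t (f (x t) - f x⋆) ≤ E t ≤ E t₀`.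
-/

open Set
open scoped InnerProductSpace

theorem ConvexOn.add_le_of_hasFDerivAt {E : Type*} [NormedAddCommGroup E] [NormedSpace ℝ E]
    {s : Set E} {f : E → ℝ} {f' : E →L[ℝ] ℝ} {y z : E} (hconv : ConvexOn ℝ s f)
    (hy : y ∈ s) (hz : z ∈ s) (hf : HasFDerivAt f f' y) :
    f y + f' (z - y) ≤ f z := by
  let L : ℝ →ᵃ[ℝ] E := AffineMap.lineMap y z
  have hderiv : HasDerivAt (f ∘ L) (f' (z - y)) 0 :=
    (AffineMap.lineMap_apply_zero (k := ℝ) y z ▸ hf).comp_hasDerivAt 0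
      AffineMap.hasDerivAt_lineMap
  have := (hconv.comp_affineMap L).le_slope_of_hasDerivAt (by simpa [L] using hy)
    (by simpa [L] using hz) one_pos hderiv
  simp only [slope_def_field, Function.comp_apply, L, AffineMap.lineMap_apply_zero,
    AffineMap.lineMap_apply_one, sub_zero, div_one] at this
  linarith

section AVD

variable {H : Type*} [NormedAddCommGroup H] [InnerProductSpace ℝ H] [CompleteSpace H]
  (f : H → ℝ) (xstar : H) (α : ℝ) (b : ℝ → ℝ) (x x' : ℝ → H)

noncomputable def avdEnergy (t : ℝ) : ℝ :=
  t ^ 2 * b t * (f (x t) - f xstar) + ‖(α - 1) • (x t - xstar) + t • x' t‖ ^ 2 / 2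

variable {f xstar α b x x'}

theorem hasDerivAt_avd_anchoredVelocity {t b₀ : ℝ} {x'' : H} (ht : t ≠ 0)
    (hx : HasDerivAt x (x' t) t) (hx' : HasDerivAt x' x'' t)
    (hode : x'' + (α / t) • x' t + b₀ • gradient f (x t) = 0) :
    HasDerivAt (fun s ↦ (α - 1) • (x s - xstar) + s • x' s)
      (-((t * b₀) • gradient f (x t))) t := by
  refine (((hx.sub_const xstar).const_smul (α - 1)).add
    ((hasDerivAt_id t).smul hx')).congr_deriv ?_
  have hx'' : x'' = -((α / t) • x' t + b₀ • gradient f (x t)) := by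
    rw [← sub_eq_zero, sub_neg_eq_add, ← add_assoc, hode]
  rw [hx'', id, smul_neg, smul_add, smul_smul, smul_smul, mul_div_cancel₀ _ ht]
  module

theorem hasDerivAt_avdEnergy {t b' : ℝ} {x'' : H} (ht : t ≠ 0) (hf : DifferentiableAt ℝ f (x t))
    (hb : HasDerivAt b b' t) (hx : HasDerivAt x (x' t) t) (hx' : HasDerivAt x' x'' t)
    (hode : x'' + (α / t) • x' t + b t • gradient f (x t) = 0) :
    HasDerivAt (avdEnergy f xstar α b x x')
      ((2 * t * b t + t ^ 2 * b') * (f (x t) - f xstar)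
        - (α - 1) * (t * b t) * ⟪x t - xstar, gradient f (x t)⟫_ℝ) t := by
  have hweight : HasDerivAt (fun s ↦ s ^ 2 * b s) (2 * t * b t + t ^ 2 * b') t :=
    ((hasDerivAt_pow 2 t).mul hb).congr_deriv (by norm_num)
  have hgap : HasDerivAt (fun s ↦ f (x s) - f xstar) ⟪gradient f (x t), x' t⟫_ℝ t := by
    simpa using (hf.hasGradientAt.hasFDerivAt.comp_hasDerivAt t hx).sub_const (f xstar)
  have hkin := (hasDerivAt_avd_anchoredVelocity ht hx hx' hode (xstar := xstar)).norm_sq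
  refine ((hweight.mul hgap).add (hkin.div_const 2)).congr_deriv ?_
  simp only [inner_neg_right, inner_add_left, real_inner_smul_right,
    real_inner_comm (gradient f (x t))]
  ring

theorem avdEnergy_deriv_nonpos {t b' : ℝ} (hconv : ConvexOn ℝ univ f)
    (hf : DifferentiableAt ℝ f (x t)) (hmin : ∀ y, f xstar ≤ f y) (ht : 0 < t) (hb : 0 < b t)
    (hα : 1 ≤ α) (hgrowth : t * b' ≤ (α - 3) * b t) :
    (2 * t * b t + t ^ 2 * b') * (f (x t) - f xstar)
      - (α - 1) * (t * b t) * ⟪x t - xstar, gradient f (x t)⟫_ℝ ≤ 0 := by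
  have hgap : 0 ≤ f (x t) - f xstar := sub_nonneg.2 (hmin (x t))
  have hgap_le : f (x t) - f xstar ≤ ⟪x t - xstar, gradient f (x t)⟫_ℝ := by
    have := hconv.add_le_of_hasFDerivAt (mem_univ _) (mem_univ xstar)
      hf.hasGradientAt.hasFDerivAt
    rw [InnerProductSpace.toDual_apply_apply, ← neg_sub, inner_neg_right,
      real_inner_comm] at this
    linarith
  have hweight : 2 * t * b t + t ^ 2 * b' ≤ (α - 1) * (t * b t) := by
    nlinarith [mul_le_mul_of_nonneg_left hgrowth ht.le]
  have hcoeff : 0 ≤ (α - 1) * (t * b t) := by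
    have : 0 ≤ α - 1 := by linarith
    positivity
  nlinarith [mul_le_mul_of_nonneg_right hweight hgap, mul_le_mul_of_nonneg_left hgap_le hcoeff]

theorem antitoneOn_avdEnergy {t₀ : ℝ} {b' : ℝ → ℝ} {x'' : ℝ → H} (hf : Differentiable ℝ f)
    (hconv : ConvexOn ℝ univ f) (hmin : ∀ y, f xstar ≤ f y) (ht₀ : 0 < t₀) (hα : 1 ≤ α)
    (hbpos : ∀ t ≥ t₀, 0 < b t) (hb : ∀ t ≥ t₀, HasDerivAt b (b' t) t)
    (hgrowth : ∀ t ≥ t₀, t * b' t ≤ (α - 3) * b t)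
    (hx : ∀ t ≥ t₀, HasDerivAt x (x' t) t) (hx' : ∀ t ≥ t₀, HasDerivAt x' (x'' t) t)
    (hode : ∀ t ≥ t₀, x'' t + (α / t) • x' t + b t • gradient f (x t) = 0) :
    AntitoneOn (avdEnergy f xstar α b x x') (Ici t₀) := by
  have hE (t : ℝ) (ht : t₀ ≤ t) := hasDerivAt_avdEnergy (xstar := xstar) (ht₀.trans_le ht).ne'
    (hf (x t)) (hb t ht) (hx t ht) (hx' t ht) (hode t ht)
  refine antitoneOn_of_deriv_nonpos (convex_Ici t₀)
    (fun t ht ↦ (hE t ht).continuousAt.continuousWithinAt) (fun t ht ↦ ?_) (fun t ht ↦ ?_)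
  · rw [interior_Ici] at ht
    exact (hE t ht.le).differentiableAt.differentiableWithinAt
  · rw [interior_Ici] at ht
    rw [(hE t ht.le).deriv]
    exact avdEnergy_deriv_nonpos hconv (hf (x t)) hmin (ht₀.trans ht) (hbpos t ht.le) hα
      (hgrowth t ht.le)

end AVD

theorem avd_rescaled_value_convergence_rate_general
    {H : Type*} [NormedAddCommGroup H] [InnerProductSpace ℝ H] [CompleteSpace H]
    (f : H → ℝ) (hf : ContDiff ℝ 2 f) (hconv : ConvexOn ℝ Set.univ f)
    (xstar : H) (hmin : ∀ y, f xstar ≤ f y)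
    (t₀ : ℝ) (ht₀ : 0 < t₀)
    (α : ℝ) (hα : 1 ≤ α)
    (b b' : ℝ → ℝ)
    (hbpos : ∀ t ≥ t₀, 0 < b t)
    (hb' : ∀ t ≥ t₀, HasDerivAt b (b' t) t)
    (hG3 : ∀ t ≥ t₀, t * b' t ≤ (α - 3) * b t)
    (x x' x'' : ℝ → H)
    (hx' : ∀ t ≥ t₀, HasDerivAt x (x' t) t)
    (hx'' : ∀ t ≥ t₀, HasDerivAt x' (x'' t) t)
    (hode : ∀ t ≥ t₀,
      x'' t + (α / t) • x' t + b t • gradient f (x t) = 0) :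
    ∃ C > 0, ∀ t ≥ t₀, f (x t) - f xstar ≤ C / (t ^ 2 * b t) := by
  set E := avdEnergy f xstar α b x x'
  have hanti : AntitoneOn E (Ici t₀) := antitoneOn_avdEnergy (hf.differentiable (by norm_num))
    hconv hmin ht₀ hα hbpos hb' hG3 hx' hx'' hode
  have hgap_le_energy (t : ℝ) : t ^ 2 * b t * (f (x t) - f xstar) ≤ E t :=
    le_add_of_nonneg_right (by positivity)
  have hE₀ : 0 ≤ E t₀ := by
    have := hbpos t₀ le_rfl
    have := sub_nonneg.2 (hmin (x t₀))
    exact (show 0 ≤ t₀ ^ 2 * b t₀ * (f (x t₀) - f xstar) by positivity).trans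
      (hgap_le_energy t₀)
  refine ⟨E t₀ + 1, by linarith, fun t ht ↦ ?_⟩
  have := hbpos t ht
  have := ht₀.trans_le ht
  rw [le_div_iff₀ (by positivity)]
  linarith [hgap_le_energy t, hanti self_mem_Ici ht ht]

/-- Case 3: time-rescaled (AVD)_{α} dynamic, convergence rate O(1/(t²b(t))). -/
theorem avd_rescaled_value_convergence_rate
    {H : Type*} [NormedAddCommGroup H] [InnerProductSpace ℝ H] [CompleteSpace H]
    (f : H → ℝ) (hf : ContDiff ℝ 2 f) (hconv : ConvexOn ℝ Set.univ f)
    (xstar : H) (hmin : ∀ y, f xstar ≤ f y)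
    (t₀ : ℝ) (ht₀ : 0 < t₀)
    (α : ℝ) (hα : 1 ≤ α)
    (b b' : ℝ → ℝ)
    (hbpos : ∀ t ≥ t₀, 0 < b t)
    (hb' : ∀ t ≥ t₀, HasDerivAt b (b' t) t)
    (hG3 : ∀ t ≥ t₀, t * b' t ≤ (α - 3) * b t)
    (x x' x'' : ℝ → H)
    (hx' : ∀ t ≥ t₀, HasDerivAt x (x' t) t)
    (hx'' : ∀ t ≥ t₀, HasDerivAt x' (x'' t) t)
    (hx''cont : ContinuousOn x'' (Set.Ici t₀))
    (hode : ∀ t ≥ t₀,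
      x'' t + (α / t) • x' t + b t • gradient f (x t) = 0) :
    ∃ C > 0, ∀ t ≥ t₀, f (x t) - f xstar ≤ C / (t ^ 2 * b t) :=
  avd_rescaled_value_convergence_rate_general f hf hconv xstar hmin t₀ ht₀ α hα b b' hbpos hb' hG3 x
    x' x'' hx' hx'' hode
end

section
/- Let f : H → ℝ be lower semicontinuous and μ-strongly convex for some μ > 0, and let λ > 0. Then the Moreau envelope f_λ, defined by f_λ(x) = inf_{z ∈ H} ( f(z) + ‖z − x‖²/(2λ) ), is a real-valued function that is strongly convex with modulus μ/(1 + λμ). -/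
open Set

/-! Completing the square, with `g := f - μ/2 ‖·‖²` and `κ := 1 + λμ`,
`f z + ‖z - x‖²/(2λ) = g z + ‖z - κ⁻¹ x‖²/(2λ/κ) + μ/(2κ) ‖x‖²`.
Taking the infimum over `z`, `f_λ x - μ/(2κ) ‖x‖²` is the Moreau envelope of the convex function
`g` with parameter `λ/κ`, evaluated at `κ⁻¹ x`. A Moreau envelope of a lower semicontinuous convex
function is convex, being the infimal projection of the jointly convex
`(z, y) ↦ g z + ‖z - y‖²/(2λ)`; an affine minorant of `g` keeps the infimum finite. -/

theorem ConvexOn.ciInf_prod_left {E F : Type*} [AddCommGroup E] [Module ℝ E]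
    [AddCommGroup F] [Module ℝ F] {Φ : E × F → ℝ} (hΦ : ConvexOn ℝ univ Φ)
    (hbdd : ∀ y, BddBelow (range fun z => Φ (z, y))) :
    ConvexOn ℝ univ fun y => ⨅ z, Φ (z, y) := by
  refine ⟨convex_univ, fun y₁ _ y₂ _ a b ha hb hab => ?_⟩
  have hsplit : ∀ z₁ z₂ : E, ⨅ z, Φ (z, a • y₁ + b • y₂) ≤ a * Φ (z₁, y₁) + b * Φ (z₂, y₂) :=
    fun z₁ z₂ => ciInf_le_of_le (hbdd _) (a • z₁ + b • z₂)
      (hΦ.2 (mem_univ (z₁, y₁)) (mem_univ (z₂, y₂)) ha hb hab)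
  calc ⨅ z, Φ (z, a • y₁ + b • y₂)
      ≤ (⨅ z, a * Φ (z, y₁)) + ⨅ z, b * Φ (z, y₂) := le_ciInf_add_ciInf hsplit
    _ = a * (⨅ z, Φ (z, y₁)) + b * ⨅ z, Φ (z, y₂) := by
      rw [Real.mul_iInf_of_nonneg ha, Real.mul_iInf_of_nonneg hb]

noncomputable def moreauEnvelope {E : Type*} [NormedAddCommGroup E] (f : E → ℝ) (lam : ℝ)
    (x : E) : ℝ :=
  ⨅ z, f z + ‖z - x‖ ^ 2 / (2 * lam)

section NormedSpace

variable {E : Type*} [NormedAddCommGroup E] [NormedSpace ℝ E] {f : E → ℝ} {lam : ℝ}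

theorem convexOn_add_norm_sub_sq_div (hf : ConvexOn ℝ univ f) (hlam : 0 ≤ lam) :
    ConvexOn ℝ univ fun p : E × E => f p.1 + ‖p.1 - p.2‖ ^ 2 / (2 * lam) := by
  have hfst : ConvexOn ℝ univ fun p : E × E => f p.1 := hf.comp_linearMap (LinearMap.fst ℝ E E)
  have hsq : ConvexOn ℝ univ fun x : E => ‖x‖ ^ 2 :=
    (convexOn_norm convex_univ).pow (fun _ _ => norm_nonneg _) 2
  have hdist : ConvexOn ℝ univ fun p : E × E => ‖p.1 - p.2‖ ^ 2 :=
    hsq.comp_linearMap (LinearMap.fst ℝ E E - LinearMap.snd ℝ E E)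
  refine (hfst.add (hdist.smul (by positivity : 0 ≤ (2 * lam)⁻¹))).congr fun p _ => ?_
  simp only [Pi.add_apply, smul_eq_mul, div_eq_inv_mul]

theorem bddBelow_range_add_norm_sub_sq_div (hf : ConvexOn ℝ univ f)
    (hlsc : LowerSemicontinuous f) (hlam : 0 < lam) (x : E) :
    BddBelow (range fun z => f z + ‖z - x‖ ^ 2 / (2 * lam)) := by
  obtain ⟨l, c, hle, -⟩ := hf.exists_affine_le_of_lt (𝕜 := ℝ) (mem_univ 0)
    (sub_one_lt (f 0)) isClosed_univ (hlsc.lowerSemicontinuousOn univ)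
  have hl : ∀ z, l z + c ≤ f z := fun z => by simpa using hle ⟨z, mem_univ z⟩
  refine ⟨l x + c - lam / 2 * ‖l‖ ^ 2, ?_⟩
  rintro _ ⟨z, rfl⟩
  have hlz : l z = l x + l (z - x) := by rw [map_sub]; ring
  have hop : -(‖l‖ * ‖z - x‖) ≤ l (z - x) := neg_le_of_abs_le (l.le_opNorm (z - x))
  have hamgm : -(lam / 2 * ‖l‖ ^ 2) ≤ -(‖l‖ * ‖z - x‖) + ‖z - x‖ ^ 2 / (2 * lam) := by
    rw [← sub_nonneg]
    have hsq : 0 ≤ (‖z - x‖ - lam * ‖l‖) ^ 2 / (2 * lam) := by positivity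
    convert hsq using 1
    field_simp
    ring
  linarith [hl z]

theorem ConvexOn.moreauEnvelope (hf : ConvexOn ℝ univ f) (hlsc : LowerSemicontinuous f)
    (hlam : 0 < lam) : ConvexOn ℝ univ (moreauEnvelope f lam) :=
  (convexOn_add_norm_sub_sq_div hf hlam.le).ciInf_prod_left
    (bddBelow_range_add_norm_sub_sq_div hf hlsc hlam)

end NormedSpace

section InnerProductSpace

variable {H : Type*} [NormedAddCommGroup H] [InnerProductSpace ℝ H]

theorem add_norm_sub_sq_div_eq (f : H → ℝ) {μ lam : ℝ} (hlam : lam ≠ 0)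
    (hκ : 1 + lam * μ ≠ 0) (z x : H) :
    f z + ‖z - x‖ ^ 2 / (2 * lam)
      = (f z - μ / 2 * ‖z‖ ^ 2) + ‖z - (1 + lam * μ)⁻¹ • x‖ ^ 2 / (2 * (lam / (1 + lam * μ)))
        + μ / (1 + lam * μ) / 2 * ‖x‖ ^ 2 := by
  rw [norm_sub_sq_real, norm_sub_sq_real, real_inner_smul_right, norm_smul, Real.norm_eq_abs,
    mul_pow, sq_abs]
  field_simp
  ring

theorem moreauEnvelope_sub_eq {f : H → ℝ} {μ lam : ℝ} (hlam : lam ≠ 0)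
    (hκ : 1 + lam * μ ≠ 0) (x : H)
    (hbdd : BddBelow (range fun z =>
      (f z - μ / 2 * ‖z‖ ^ 2) + ‖z - (1 + lam * μ)⁻¹ • x‖ ^ 2 / (2 * (lam / (1 + lam * μ))))) :
    moreauEnvelope f lam x - μ / (1 + lam * μ) / 2 * ‖x‖ ^ 2
      = moreauEnvelope (fun z => f z - μ / 2 * ‖z‖ ^ 2) (lam / (1 + lam * μ))
          ((1 + lam * μ)⁻¹ • x) := by
  have hshift := (OrderIso.addRight (μ / (1 + lam * μ) / 2 * ‖x‖ ^ 2)).map_ciInf hbdd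
  simp only [OrderIso.addRight_apply] at hshift
  rw [sub_eq_iff_eq_add, moreauEnvelope, moreauEnvelope, hshift]
  exact iInf_congr fun z => add_norm_sub_sq_div_eq f hlam hκ z x

end InnerProductSpace

theorem moreau_envelope_strongly_convex_general
    {H : Type*} [NormedAddCommGroup H] [InnerProductSpace ℝ H]
    (f : H → ℝ) (hlsc : LowerSemicontinuous f)
    (μ lam : ℝ) (hμ : 0 < μ) (hlam : 0 < lam)
    (hsc : ConvexOn ℝ Set.univ (fun z => f z - μ / 2 * ‖z‖ ^ 2)) :
    ConvexOn ℝ Set.univ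
      (fun x => (⨅ z : H, (f z + ‖z - x‖ ^ 2 / (2 * lam)))
        - (μ / (1 + lam * μ)) / 2 * ‖x‖ ^ 2) := by
  have hκ : 0 < 1 + lam * μ := by positivity
  have hlam' : 0 < lam / (1 + lam * μ) := by positivity
  have hglsc : LowerSemicontinuous fun z => f z - μ / 2 * ‖z‖ ^ 2 :=
    hlsc.add (by fun_prop : Continuous fun z : H => -(μ / 2 * ‖z‖ ^ 2)).lowerSemicontinuous
  have hshift : (fun x => moreauEnvelope f lam x - μ / (1 + lam * μ) / 2 * ‖x‖ ^ 2)
      = moreauEnvelope (fun z => f z - μ / 2 * ‖z‖ ^ 2) (lam / (1 + lam * μ))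
          ∘ ((1 + lam * μ)⁻¹ • LinearMap.id : H →ₗ[ℝ] H) :=
    funext fun x => moreauEnvelope_sub_eq hlam.ne' hκ.ne' x
      (bddBelow_range_add_norm_sub_sq_div hsc hglsc hlam' _)
  have hconv := (hsc.moreauEnvelope hglsc hlam').comp_linearMap
    ((1 + lam * μ)⁻¹ • LinearMap.id : H →ₗ[ℝ] H)
  rw [← hshift] at hconv
  exact hconv

/-- The Moreau envelope of a μ-strongly convex function is strongly convex
with modulus μ/(1 + λμ). -/
theorem moreau_envelope_strongly_convex
    {H : Type*} [NormedAddCommGroup H] [InnerProductSpace ℝ H] [CompleteSpace H]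
    (f : H → ℝ) (hlsc : LowerSemicontinuous f)
    (μ lam : ℝ) (hμ : 0 < μ) (hlam : 0 < lam)
    (hsc : ConvexOn ℝ Set.univ (fun z => f z - μ / 2 * ‖z‖ ^ 2)) :
    ConvexOn ℝ Set.univ
      (fun x => (⨅ z : H, (f z + ‖z - x‖ ^ 2 / (2 * lam)))
        - (μ / (1 + lam * μ)) / 2 * ‖x‖ ^ 2) :=
  moreau_envelope_strongly_convex_general f hlsc μ lam hμ hlam hsc
end

section
/- Let f : H → ℝ be a differentiable μ-strongly convex function (μ > 0) with unique minimizer x*, let s > 0 and β satisfy 0 ≤ β ≤ 1/(2√μ) and √s ≤ β, and let (x_k)_{k≥0} be a sequence in H satisfying for every k ≥ 1 the implicit recursion (1/√s)(x_{k+1} − 2x_k + x_{k−1}) + 2√μ·(x_{k+1} − x_k) + β·(∇f(x_{k+1}) − ∇f(x_k)) + √s·∇f(x_{k+1}) = 0 (the (IPAHD-SC) algorithm). Set q := 1/(1 + (1/2)√(μs)) and E₁ := f(x₁) − f(x*) + (1/2)‖√μ(x₁ − x*) + (1/√s)(x₁ − x₀) + β∇f(x₁)‖². Then for every k ≥ 1,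 (μ/2)‖x_k − x*‖² ≤ f(x_k) − min_H f ≤ E₁·q^{k−1}. Moreover, with θ := 1/(1 + √(μs)), there exists a constant C > 0 such that θ^k · Σ_{j=0}^{k−2} θ^{−j} ‖∇f(x_j)‖² ≤ C·q^k for all k ≥ 2. -/
/-!
A Lyapunov argument. Put `v_k = √μ (x_k - x*) + (x_k - x_{k-1}) / √s + β ∇f(x_k)` and
`E_k = f(x_k) - min f + ½‖v_k‖²`. The recursion says exactly
`v_k = v_{k+1} + √μ (x_{k+1} - x_k) + √s ∇f(x_{k+1})`, and three instances of the strong convexity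
inequality `f w ≥ f p + ⟪∇f p, w - p⟫ + μ/2 ‖w - p‖²` (from `x_{k+1}` towards `x_k` and `x*`, from
`x*` towards `x_k`) turn this into `(1 + √(μs)/2) E_{k+1} + (s/2) ‖∇f(x_{k+1})‖² ≤ E_k`.
Hence `E_k ≤ q^{k-1} E_1`, which bounds the values, and `‖∇f(x_j)‖² = O(q^j)`; since `θ < q`, the
`θ`-weighted sums of the squared gradients are then `O(q^k)` by a geometric sum.
-/

open Real Set Finset
open scoped RealInnerProductSpace

theorem ConvexOn.le_of_hasFDerivAt {E : Type*} [NormedAddCommGroup E] [NormedSpace ℝ E]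
    {g : E → ℝ} {g' : E →L[ℝ] ℝ} {p : E} (hg : ConvexOn ℝ univ g) (hd : HasFDerivAt g g' p)
    (w : E) : g p + g' (w - p) ≤ g w := by
  have hline : HasDerivAt (g ∘ (AffineMap.lineMap p w : ℝ →ᵃ[ℝ] E)) (g' (w - p)) 0 :=
    hd.comp_hasDerivAt_of_eq (0 : ℝ) AffineMap.hasDerivAt_lineMap (by simp)
  have hslope := (hg.comp_affineMap (AffineMap.lineMap p w)).le_slope_of_hasDerivAt
    (mem_univ 0) (mem_univ 1) one_pos hline
  simp only [slope_def_field, Function.comp_apply, AffineMap.lineMap_apply_zero,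
    AffineMap.lineMap_apply_one, sub_zero, div_one] at hslope
  linarith

section InnerProductSpace

variable {H : Type*} [NormedAddCommGroup H] [InnerProductSpace ℝ H]

/- Here `u`, `d`, `g` stand for `x_{k+1} - x*`, `(x_{k+1} - x_k) / √s`, `∇f(x_{k+1})`, and `F`, `F'`
for the value gaps at `x_k`, `x_{k+1}`. The final combination, together with the squares
`‖a • u + d‖²` and `‖a • d + g‖²`, is a nonnegativity certificate. -/
theorem lyapunov_decrease_of_strongConvex_bounds {a r β F F' : ℝ} {u d g : H}
    (ha : 0 < a) (hr : 0 < r) (hrβ : r ≤ β) (haβ : a * β ≤ 1 / 2) (hF' : 0 ≤ F')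
    (h_descent : F' - F + a ^ 2 * r ^ 2 / 2 * ‖d‖ ^ 2 ≤ r * ⟪g, d⟫)
    (h_star : F' + a ^ 2 / 2 * ‖u‖ ^ 2 ≤ ⟪g, u⟫)
    (h_prev : a ^ 2 / 2 * ‖u - r • d‖ ^ 2 ≤ F) :
    (1 + a * r / 2) * (F' + ‖a • u + d + β • g‖ ^ 2 / 2) + r ^ 2 / 2 * ‖g‖ ^ 2
      ≤ F + ‖a • u + d + β • g + r • (a • d + g)‖ ^ 2 / 2 := by
  have hβ : 0 < β := hr.trans_le hrβ
  have har : a * r ≤ 1 / 2 := by nlinarith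
  have hgu : 0 ≤ ⟪g, u⟫ := by nlinarith [sq_nonneg ‖u‖]
  have c₁ : 0 ≤ 1 - a * r / 4 := by linarith
  have c₂ : 0 ≤ 1 - 2 * a * β := by linarith
  have c₃ : 0 ≤ 1 - a * r / 2 := by linarith
  have c₄ : 0 ≤ a * r / 2 + a ^ 2 * r ^ 2 / 2 - a ^ 2 * β * r / 4 := by nlinarith [mul_pos ha hr]
  have c₅ : 0 ≤ 3 * β * r / 4 - a * β ^ 2 * r / 4 - 5 * r ^ 2 / 8 := by
    nlinarith [mul_pos hβ hr]
  have hsq₁ : 0 ≤ ‖a • u + d‖ ^ 2 := by positivity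
  have hsq₂ : 0 ≤ ‖a • d + g‖ ^ 2 := by positivity
  have huu : 0 ≤ ‖u‖ ^ 2 := by positivity
  have hdd : 0 ≤ ‖d‖ ^ 2 := by positivity
  have hgg : 0 ≤ ‖g‖ ^ 2 := by positivity
  simp only [← real_inner_self_eq_norm_sq, inner_add_left, inner_add_right, inner_sub_left,
    inner_sub_right, real_inner_smul_left, real_inner_smul_right, real_inner_comm u d,
    real_inner_comm g u, real_inner_comm g d] at h_descent h_star h_prev hsq₁ hsq₂ huu hdd hgg ⊢
  linear_combination (3 * a * r / 4) * h_star + mul_le_mul_of_nonneg_left h_descent c₁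
    + (a * r / 4) * h_prev + (a * r / 4) * mul_nonneg c₂ hgu
    + (a * r / 4) * mul_nonneg c₃ hsq₁ + (β * r / 4 + 5 * r ^ 2 / 8) * hsq₂
    + (a ^ 4 * r ^ 2 / 8) * huu + mul_nonneg c₄ hdd + mul_nonneg c₅ hgg

variable [CompleteSpace H]

theorem HasGradientAt.add_inner_add_sq_norm_le {f : H → ℝ} {f' p : H} {μ : ℝ}
    (hf : HasGradientAt f f' p) (hsc : ConvexOn ℝ univ (fun z => f z - μ / 2 * ‖z‖ ^ 2))
    (w : H) : f p + ⟪f', w - p⟫ + μ / 2 * ‖w - p‖ ^ 2 ≤ f w := by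
  have h := hsc.le_of_hasFDerivAt
    (hf.hasFDerivAt.sub ((hasStrictFDerivAt_norm_sq p).hasFDerivAt.const_mul (μ / 2))) w
  have hw : ‖w‖ ^ 2 = ‖p‖ ^ 2 + 2 * ⟪p, w - p⟫ + ‖w - p‖ ^ 2 := by
    rw [← norm_add_sq_real, add_sub_cancel]
  simp only [sub_apply, smul_apply,
    InnerProductSpace.toDual_apply_apply, innerSL_apply_apply, smul_eq_mul, nsmul_eq_mul] at h
  rw [hw] at h
  linarith

theorem sq_norm_sub_le_sub_of_forall_le {f : H → ℝ} {μ : ℝ} {xstar : H}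
    (hf : DifferentiableAt ℝ f xstar) (hsc : ConvexOn ℝ univ (fun z => f z - μ / 2 * ‖z‖ ^ 2))
    (hmin : ∀ y, f xstar ≤ f y) (w : H) : μ / 2 * ‖w - xstar‖ ^ 2 ≤ f w - f xstar := by
  have hzero : gradient f xstar = 0 := by
    simp [gradient, IsLocalMin.fderiv_eq_zero (Filter.Eventually.of_forall hmin)]
  have h := hf.hasGradientAt.add_inner_add_sq_norm_le hsc w
  rw [hzero, inner_zero_left] at h
  linarith

/- The Lyapunov energy `E_k` of the paper, with `a = √μ` and `r = √s`. -/
noncomputable def ipahdEnergy (f : H → ℝ) (xstar : H) (a r β : ℝ) (x : ℕ → H) (k : ℕ) : ℝ :=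
  f (x k) - f xstar
    + ‖a • (x k - xstar) + (1 / r) • (x k - x (k - 1)) + β • gradient f (x k)‖ ^ 2 / 2

theorem sub_le_ipahdEnergy (f : H → ℝ) (xstar : H) (a r β : ℝ) (x : ℕ → H) (k : ℕ) :
    f (x k) - f xstar ≤ ipahdEnergy f xstar a r β x k :=
  le_add_of_nonneg_right (by positivity)

theorem ipahdEnergy_succ_le {f : H → ℝ} {xstar : H} {a r β : ℝ} {x : ℕ → H} {k : ℕ}
    (hdiff : Differentiable ℝ f) (hsc : ConvexOn ℝ univ (fun z => f z - a ^ 2 / 2 * ‖z‖ ^ 2))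
    (hmin : ∀ y, f xstar ≤ f y) (ha : 0 < a) (hr : 0 < r) (hrβ : r ≤ β) (haβ : a * β ≤ 1 / 2)
    (hrec : (1 / r) • (x (k + 1) - (2 : ℝ) • x k + x (k - 1)) + (2 * a) • (x (k + 1) - x k)
      + β • (gradient f (x (k + 1)) - gradient f (x k)) + r • gradient f (x (k + 1)) = 0) :
    (1 + a * r / 2) * ipahdEnergy f xstar a r β x (k + 1) + r ^ 2 / 2 * ‖gradient f (x (k + 1))‖ ^ 2
      ≤ ipahdEnergy f xstar a r β x k := by
  have h_descent := (hdiff (x (k + 1))).hasGradientAt.add_inner_add_sq_norm_le hsc (x k)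
  have h_star := (hdiff (x (k + 1))).hasGradientAt.add_inner_add_sq_norm_le hsc xstar
  have h_prev := sq_norm_sub_le_sub_of_forall_le (hdiff xstar) hsc hmin (x k)
  set u := x (k + 1) - xstar
  set d := (1 / r) • (x (k + 1) - x k)
  set g := gradient f (x (k + 1))
  have hrd : r • d = x (k + 1) - x k := by
    rw [smul_smul, mul_one_div_cancel hr.ne', one_smul]
  have hv : a • (x k - xstar) + (1 / r) • (x k - x (k - 1)) + β • gradient f (x k)
      = a • u + d + β • g + r • (a • d + g) := by
    rw [smul_add, smul_comm r a d, hrd]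
    linear_combination (norm := module) -hrec
  rw [show x k - x (k + 1) = -(r • d) by rw [hrd, neg_sub], inner_neg_right, norm_neg,
    real_inner_smul_right, norm_smul, mul_pow, Real.norm_eq_abs, sq_abs] at h_descent
  rw [show xstar - x (k + 1) = -u from (neg_sub _ _).symm, inner_neg_right, norm_neg] at h_star
  rw [show x k - xstar = u - r • d by rw [hrd, sub_sub_sub_cancel_left]] at h_prev
  have step := lyapunov_decrease_of_strongConvex_bounds (F := f (x k) - f xstar)
    (F' := f (x (k + 1)) - f xstar) (g := g) ha hr hrβ haβ (sub_nonneg.2 (hmin _))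
    (by linarith) (by linarith) h_prev
  simpa only [ipahdEnergy, hv, Nat.add_sub_cancel] using step

end InnerProductSpace

theorem decay_of_one_add_mul_succ_add_le {E b : ℕ → ℝ} {c : ℝ} (hc : 0 ≤ c)
    (hb : ∀ k, 0 ≤ b k) (h : ∀ k, 1 ≤ k → (1 + c) * E (k + 1) + b (k + 1) ≤ E k) (n : ℕ) :
    E (n + 1) ≤ (1 + c)⁻¹ ^ n * E 1 :=
  le_geom (u := fun n => E (n + 1)) (by positivity) n fun k _ => by
    rw [inv_mul_eq_div, le_div_iff₀ (by positivity)]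
    linarith [h (k + 1) le_add_self, hb (k + 2)]

theorem dissipation_decay_of_one_add_mul_succ_add_le {E b : ℕ → ℝ} {c : ℝ} (hc : 0 ≤ c)
    (hb : ∀ k, 0 ≤ b k) (hE : ∀ k, 0 ≤ E k)
    (h : ∀ k, 1 ≤ k → (1 + c) * E (k + 1) + b (k + 1) ≤ E k) (n : ℕ) :
    b (n + 2) ≤ (1 + c)⁻¹ ^ n * E 1 := by
  have hE_succ : 0 ≤ (1 + c) * E (n + 2) := mul_nonneg (by positivity) (hE _)
  linarith [h (n + 1) le_add_self, decay_of_one_add_mul_succ_add_le hc hb h n]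

theorem exists_pos_forall_le_mul_pow {b : ℕ → ℝ} {q C : ℝ} {N : ℕ} (hq : 0 < q)
    (hb : ∀ j, b (j + N) ≤ C * q ^ j) : ∃ M > 0, ∀ j, b j ≤ M * q ^ j := by
  set S := ∑ i ∈ range N, |b i| / q ^ i
  have hS : 0 ≤ S := sum_nonneg fun i _ => by positivity
  refine ⟨|C| / q ^ N + S + 1, by positivity, fun j => ?_⟩
  rcases le_or_gt N j with hj | hj
  · obtain ⟨i, rfl⟩ := Nat.exists_eq_add_of_le' hj
    calc b (i + N) ≤ |C| / q ^ N * q ^ (i + N) := by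
          rw [pow_add, div_mul_eq_mul_div, mul_div_assoc, mul_div_cancel_right₀ _ (by positivity)]
          exact (hb i).trans (by gcongr; exact le_abs_self C)
      _ ≤ (|C| / q ^ N + S + 1) * q ^ (i + N) := by gcongr; linarith
  · have hterm : |b j| / q ^ j ≤ S :=
      single_le_sum (f := fun i => |b i| / q ^ i) (fun i _ => by positivity) (mem_range.2 hj)
    calc b j ≤ |b j| / q ^ j * q ^ j := by
          rw [div_mul_cancel₀ _ (by positivity)]; exact le_abs_self _
      _ ≤ (|C| / q ^ N + S + 1) * q ^ j := by
          gcongr; linarith [show 0 ≤ |C| / q ^ N by positivity]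

theorem exists_pos_pow_mul_sum_inv_pow_mul_le {b : ℕ → ℝ} {q θ M : ℝ} (hθ : 0 < θ)
    (hθq : θ < q) (hM : 0 < M) (hb : ∀ j, b j ≤ M * q ^ j) :
    ∃ C > 0, ∀ k, θ ^ k * ∑ j ∈ range (k - 1), (1 / θ) ^ j * b j ≤ C * q ^ k := by
  have hq : 0 < q := hθ.trans hθq
  have hρ : 1 < q / θ := (one_lt_div hθ).2 hθq
  refine ⟨M * θ ^ 2 / (q * (q - θ)), by have := sub_pos.2 hθq; positivity, fun k => ?_⟩
  rcases k with _ | n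
  · simp only [zero_tsub, range_zero, sum_empty, mul_zero, pow_zero, mul_one]
    positivity
  have hgeom : ∑ j ∈ range n, (q / θ) ^ j ≤ (q / θ) ^ n / (q / θ - 1) := by
    rw [geom_sum_eq hρ.ne' n]
    gcongr
    linarith
  calc θ ^ (n + 1) * ∑ j ∈ range (n + 1 - 1), (1 / θ) ^ j * b j
      ≤ θ ^ (n + 1) * ∑ j ∈ range n, M * (q / θ) ^ j := by
        rw [Nat.add_sub_cancel]
        gcongr θ ^ (n + 1) * ?_
        refine sum_le_sum fun j _ => ?_
        rw [div_pow, div_pow, one_pow]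
        exact (mul_le_mul_of_nonneg_left (hb j) (by positivity)).trans_eq (by ring)
    _ ≤ θ ^ (n + 1) * (M * ((q / θ) ^ n / (q / θ - 1))) := by
        rw [← mul_sum]; gcongr
    _ = M * θ ^ 2 / (q * (q - θ)) * q ^ (n + 1) := by
        have : q - θ ≠ 0 := (sub_pos.2 hθq).ne'
        rw [div_pow]
        field_simp
        ring

theorem ipahd_sc_linear_convergence_general
    {H : Type*} [NormedAddCommGroup H] [InnerProductSpace ℝ H] [CompleteSpace H]
    (f : H → ℝ) (hdiff : Differentiable ℝ f)
    (μ : ℝ) (hμ : 0 < μ)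
    (hsc : ConvexOn ℝ Set.univ (fun z => f z - μ / 2 * ‖z‖ ^ 2))
    (xstar : H) (hmin : ∀ y, f xstar ≤ f y)
    (s β : ℝ) (hs : 0 < s)
    (hβ : β ≤ 1 / (2 * Real.sqrt μ)) (hsβ : Real.sqrt s ≤ β)
    (x : ℕ → H)
    (hrec : ∀ k : ℕ, 1 ≤ k →
      (1 / Real.sqrt s) • (x (k + 1) - (2 : ℝ) • x k + x (k - 1))
        + (2 * Real.sqrt μ) • (x (k + 1) - x k)
        + β • (gradient f (x (k + 1)) - gradient f (x k))
        + Real.sqrt s • gradient f (x (k + 1)) = 0)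
    (q θ E₁ : ℝ)
    (hq : q = 1 / (1 + (1 / 2) * Real.sqrt (μ * s)))
    (hθ : θ = 1 / (1 + Real.sqrt (μ * s)))
    (hE₁ : E₁ = f (x 1) - f xstar
      + (1 / 2) * ‖Real.sqrt μ • (x 1 - xstar) + (1 / Real.sqrt s) • (x 1 - x 0)
          + β • gradient f (x 1)‖ ^ 2) :
    (∀ k : ℕ, 1 ≤ k →
      μ / 2 * ‖x k - xstar‖ ^ 2 ≤ f (x k) - f xstar ∧
      f (x k) - f xstar ≤ E₁ * q ^ (k - 1)) ∧
    ∃ C > 0, ∀ k : ℕ, 2 ≤ k →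
      θ ^ k * ∑ j ∈ Finset.range (k - 1), (1 / θ) ^ j * ‖gradient f (x j)‖ ^ 2
        ≤ C * q ^ k := by
  rw [Real.sqrt_mul hμ.le] at hq hθ
  set a := Real.sqrt μ
  set r := Real.sqrt s
  have ha : 0 < a := Real.sqrt_pos.2 hμ
  have hr : 0 < r := Real.sqrt_pos.2 hs
  have haβ : a * β ≤ 1 / 2 := by
    rw [le_div_iff₀ (by positivity)] at hβ; linarith
  have hsc' : ConvexOn ℝ univ (fun z => f z - a ^ 2 / 2 * ‖z‖ ^ 2) := by
    rwa [Real.sq_sqrt hμ.le]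
  replace hq : q = (1 + a * r / 2)⁻¹ := by rw [hq]; ring
  set E := ipahdEnergy f xstar a r β x
  have hstep (k : ℕ) (hk : 1 ≤ k) :
      (1 + a * r / 2) * E (k + 1) + r ^ 2 / 2 * ‖gradient f (x (k + 1))‖ ^ 2 ≤ E k :=
    ipahdEnergy_succ_le hdiff hsc' hmin ha hr hsβ haβ (hrec k hk)
  have hE_nonneg (k : ℕ) : 0 ≤ E k :=
    (sub_nonneg.2 (hmin (x k))).trans (sub_le_ipahdEnergy f xstar a r β x k)
  have hE1 : E 1 = E₁ := by rw [hE₁]; simp only [E, ipahdEnergy]; ring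
  have hc : 0 ≤ a * r / 2 := by positivity
  have hb (k : ℕ) : 0 ≤ r ^ 2 / 2 * ‖gradient f (x k)‖ ^ 2 := by positivity
  refine ⟨fun k hk => ⟨sq_norm_sub_le_sub_of_forall_le (hdiff xstar) hsc hmin (x k), ?_⟩, ?_⟩
  · obtain ⟨n, rfl⟩ := Nat.exists_eq_add_of_le' hk
    calc f (x (n + 1)) - f xstar ≤ E (n + 1) := sub_le_ipahdEnergy f xstar a r β x (n + 1)
      _ ≤ E₁ * q ^ (n + 1 - 1) := by
        rw [Nat.add_sub_cancel, ← hE1, mul_comm, hq]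
        exact decay_of_one_add_mul_succ_add_le hc hb hstep n
  have hgrad (n : ℕ) : ‖gradient f (x (n + 2))‖ ^ 2 ≤ 2 * E₁ / r ^ 2 * q ^ n := by
    have := dissipation_decay_of_one_add_mul_succ_add_le hc hb hE_nonneg hstep n
    rw [div_mul_eq_mul_div, le_div_iff₀ (by positivity), hq, ← hE1]
    linarith
  have hq_pos : 0 < q := by rw [hq]; positivity
  obtain ⟨M, hM, hM_bound⟩ :=
    exists_pos_forall_le_mul_pow (b := fun j => ‖gradient f (x j)‖ ^ 2) (N := 2) hq_pos hgrad
  have hθ_lt_q : θ < q := by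
    rw [hq, hθ, one_div]; exact inv_strictAnti₀ (by positivity) (by linarith [mul_pos ha hr])
  obtain ⟨C, hC, hC_bound⟩ :=
    exists_pos_pow_mul_sum_inv_pow_mul_le (by rw [hθ]; positivity) hθ_lt_q hM hM_bound
  exact ⟨C, hC, fun k _ => hC_bound k⟩

/-- Theorem 5.1: linear convergence of the values and exponential decay of the
gradients for the proximal algorithm (IPAHD-SC). -/
theorem ipahd_sc_linear_convergence
    {H : Type*} [NormedAddCommGroup H] [InnerProductSpace ℝ H] [CompleteSpace H]
    (f : H → ℝ) (hdiff : Differentiable ℝ f)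
    (μ : ℝ) (hμ : 0 < μ)
    (hsc : ConvexOn ℝ Set.univ (fun z => f z - μ / 2 * ‖z‖ ^ 2))
    (xstar : H) (hmin : ∀ y, f xstar ≤ f y)
    (s β : ℝ) (hs : 0 < s)
    (hβ0 : 0 ≤ β) (hβ : β ≤ 1 / (2 * Real.sqrt μ)) (hsβ : Real.sqrt s ≤ β)
    (x : ℕ → H)
    (hrec : ∀ k : ℕ, 1 ≤ k →
      (1 / Real.sqrt s) • (x (k + 1) - (2 : ℝ) • x k + x (k - 1))
        + (2 * Real.sqrt μ) • (x (k + 1) - x k)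
        + β • (gradient f (x (k + 1)) - gradient f (x k))
        + Real.sqrt s • gradient f (x (k + 1)) = 0)
    (q θ E₁ : ℝ)
    (hq : q = 1 / (1 + (1 / 2) * Real.sqrt (μ * s)))
    (hθ : θ = 1 / (1 + Real.sqrt (μ * s)))
    (hE₁ : E₁ = f (x 1) - f xstar
      + (1 / 2) * ‖Real.sqrt μ • (x 1 - xstar) + (1 / Real.sqrt s) • (x 1 - x 0)
          + β • gradient f (x 1)‖ ^ 2) :
    (∀ k : ℕ, 1 ≤ k →
      μ / 2 * ‖x k - xstar‖ ^ 2 ≤ f (x k) - f xstar ∧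
      f (x k) - f xstar ≤ E₁ * q ^ (k - 1)) ∧
    ∃ C > 0, ∀ k : ℕ, 2 ≤ k →
      θ ^ k * ∑ j ∈ Finset.range (k - 1), (1 / θ) ^ j * ‖gradient f (x j)‖ ^ 2
        ≤ C * q ^ k :=
  ipahd_sc_linear_convergence_general f hdiff μ hμ hsc xstar hmin s β hs hβ hsβ x hrec q θ E₁ hq hθ
    hE₁
end

section
/- Let f : H → ℝ be a convex differentiable function whose gradient is L-Lipschitz continuous, and let 0 < s ≤ 1/L. Then for all x, y ∈ H: f(y − s∇f(y)) ≤ f(x) + ⟨∇f(y), y − x⟩ − (s/2)‖∇f(y)‖² − (s/2)‖∇f(x) − ∇f(y)‖². -/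
/-!
Two standard bounds for a function with `L`-Lipschitz gradient are combined. The descent lemma
`f v ≤ f u + ⟪∇f u, v - u⟫ + L/2 ‖v - u‖²` follows by comparing `t ↦ f (u + t (v - u))` with a
quadratic on `[0, 1]`; at `v = y - s ∇f y` with `s L ≤ 1` it gives
`f (y - s ∇f y) ≤ f y - s/2 ‖∇f y‖²`. For convex `f`, the support inequality at `y` and the descent
lemma at `x`, both evaluated at `x - L⁻¹ (∇f x - ∇f y)`, give
`f y + ⟪∇f y, x - y⟫ + ‖∇f x - ∇f y‖² / (2L) ≤ f x`. Adding the two and using `s ≤ 1/L` proves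
the claim.
-/

open Set AffineMap
open scoped RealInnerProductSpace

theorem ConvexOn.add_fderiv_sub_le {E : Type*} [NormedAddCommGroup E] [NormedSpace ℝ E]
    {f : E → ℝ} (hf : ConvexOn ℝ univ f) {u : E} (hfu : DifferentiableAt ℝ f u) (v : E) :
    f u + fderiv ℝ f u (v - u) ≤ f v := by
  have hline : ConvexOn ℝ univ (f ∘ (lineMap u v : ℝ → E)) := by
    simpa using hf.comp_affineMap (lineMap (k := ℝ) u v)
  have hderiv : HasDerivAt (f ∘ (lineMap u v : ℝ → E)) (fderiv ℝ f u (v - u)) 0 := by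
    rw [← lineMap_apply_zero (k := ℝ) u v] at hfu
    simpa using hfu.hasFDerivAt.comp_hasDerivAt (0 : ℝ) hasDerivAt_lineMap
  have hslope := hline.le_slope_of_hasDerivAt (mem_univ 0) (mem_univ 1) one_pos hderiv
  rw [slope_def_field, Function.comp_apply, Function.comp_apply, lineMap_apply_zero,
    lineMap_apply_one, sub_zero, div_one] at hslope
  linarith

section LipschitzGradient

variable {H : Type*} [NormedAddCommGroup H] [InnerProductSpace ℝ H] [CompleteSpace H]
  {f : H → ℝ} {L : ℝ}

theorem ConvexOn.add_inner_gradient_sub_le (hf : ConvexOn ℝ univ f) {u : H}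
    (hfu : DifferentiableAt ℝ f u) (v : H) : f u + ⟪gradient f u, v - u⟫ ≤ f v := by
  simpa [inner_gradient_left] using hf.add_fderiv_sub_le hfu v

theorem inner_gradient_lineMap_sub_le
    (hLip : ∀ u v : H, ‖gradient f u - gradient f v‖ ≤ L * ‖u - v‖) (u v : H) {t : ℝ}
    (ht : 0 ≤ t) :
    ⟪gradient f (lineMap u v t) - gradient f u, v - u⟫ ≤ L * t * ‖v - u‖ ^ 2 :=
  calc ⟪gradient f (lineMap u v t) - gradient f u, v - u⟫
      ≤ ‖gradient f (lineMap u v t) - gradient f u‖ * ‖v - u‖ := real_inner_le_norm _ _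
    _ ≤ L * ‖lineMap u v t - u‖ * ‖v - u‖ := by gcongr; exact hLip _ _
    _ = L * t * ‖v - u‖ ^ 2 := by
      rw [← vsub_eq_sub, lineMap_vsub_left, vsub_eq_sub, norm_smul, Real.norm_of_nonneg ht]
      ring

theorem apply_le_add_inner_gradient_add_sq (hf : Differentiable ℝ f)
    (hLip : ∀ u v : H, ‖gradient f u - gradient f v‖ ≤ L * ‖u - v‖) (u v : H) :
    f v ≤ f u + ⟪gradient f u, v - u⟫ + L / 2 * ‖v - u‖ ^ 2 := by
  have hline (t : ℝ) :
      HasDerivAt (f ∘ lineMap u v) ⟪gradient f (lineMap u v t), v - u⟫ t := by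
    simpa [inner_gradient_left] using (hf _).hasFDerivAt.comp_hasDerivAt t hasDerivAt_lineMap
  have hquadratic (t : ℝ) :
      HasDerivAt (fun t ↦ f u + t * ⟪gradient f u, v - u⟫ + L / 2 * t ^ 2 * ‖v - u‖ ^ 2)
        (⟪gradient f u, v - u⟫ + L * t * ‖v - u‖ ^ 2) t := by
    refine ((((hasDerivAt_id t).mul_const _).const_add _).add
      (((hasDerivAt_pow 2 t).const_mul (L / 2)).mul_const _)).congr_deriv ?_
    ring
  have hcompare := image_le_of_deriv_right_le_deriv_boundary (a := 0) (b := 1)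
    (fun t _ ↦ (hline t).continuousAt.continuousWithinAt) (fun t _ ↦ (hline t).hasDerivWithinAt)
    (by simp) (fun t _ ↦ (hquadratic t).continuousAt.continuousWithinAt)
    (fun t _ ↦ (hquadratic t).hasDerivWithinAt) (fun t ht ↦ ?_) (right_mem_Icc.2 zero_le_one)
  · simpa using hcompare
  · have := inner_gradient_lineMap_sub_le hLip u v ht.1
    rw [inner_sub_left] at this
    linarith

theorem apply_sub_smul_gradient_le (hf : Differentiable ℝ f)
    (hLip : ∀ u v : H, ‖gradient f u - gradient f v‖ ≤ L * ‖u - v‖) (y : H) {s : ℝ}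
    (hs : 0 ≤ s) (hLs : L * s ≤ 1) :
    f (y - s • gradient f y) ≤ f y - s / 2 * ‖gradient f y‖ ^ 2 := by
  have hdescent := apply_le_add_inner_gradient_add_sq hf hLip y (y - s • gradient f y)
  rw [sub_sub_cancel_left, inner_neg_right, real_inner_smul_right, real_inner_self_eq_norm_sq,
    norm_neg, norm_smul, mul_pow, Real.norm_eq_abs, sq_abs] at hdescent
  have hquad : L * s ^ 2 ≤ s := by nlinarith
  linarith [mul_le_mul_of_nonneg_right hquad (sq_nonneg ‖gradient f y‖)]

theorem ConvexOn.add_inner_gradient_add_sq_norm_le (hf : ConvexOn ℝ univ f)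
    (hdiff : Differentiable ℝ f)
    (hLip : ∀ u v : H, ‖gradient f u - gradient f v‖ ≤ L * ‖u - v‖) (x y : H) :
    f y + ⟪gradient f y, x - y⟫ + 1 / (2 * L) * ‖gradient f x - gradient f y‖ ^ 2 ≤ f x := by
  set g := gradient f x - gradient f y
  have hsupport := hf.add_inner_gradient_sub_le (hdiff y) (x - L⁻¹ • g)
  have hdescent := apply_le_add_inner_gradient_add_sq hdiff hLip x (x - L⁻¹ • g)
  rw [sub_right_comm, inner_sub_right, real_inner_smul_right] at hsupport
  rw [sub_sub_cancel_left, inner_neg_right, real_inner_smul_right, norm_neg, norm_smul, mul_pow,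
    Real.norm_eq_abs, sq_abs] at hdescent
  have hg : ⟪gradient f x, g⟫ - ⟪gradient f y, g⟫ = ‖g‖ ^ 2 := by
    rw [← inner_sub_left, real_inner_self_eq_norm_sq]
  -- also at `L = 0`, where `L⁻¹ = 0`
  have hL : L * L⁻¹ ^ 2 = L⁻¹ := by
    rw [sq, ← mul_assoc]
    simpa only [inv_inv] using inv_mul_mul_self L⁻¹
  linear_combination hsupport + hdescent - L⁻¹ * hg + ‖g‖ ^ 2 / 2 * hL

end LipschitzGradient

/-- Extended descent lemma (Lemma A.1). -/
theorem extended_descent_lemma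
    {H : Type*} [NormedAddCommGroup H] [InnerProductSpace ℝ H] [CompleteSpace H]
    (f : H → ℝ) (hconv : ConvexOn ℝ Set.univ f) (hdiff : Differentiable ℝ f)
    (L : ℝ) (hL : 0 < L)
    (hLip : ∀ u v : H, ‖gradient f u - gradient f v‖ ≤ L * ‖u - v‖)
    (s : ℝ) (hs0 : 0 < s) (hsL : s ≤ 1 / L) :
    ∀ x y : H,
      f (y - s • gradient f y) ≤
        f x + (inner ℝ (gradient f y) (y - x) : ℝ) - s / 2 * ‖gradient f y‖ ^ 2
          - s / 2 * ‖gradient f x - gradient f y‖ ^ 2 := by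
  intro x y
  have hLs : L * s ≤ 1 := by rwa [le_div_iff₀ hL, mul_comm] at hsL
  have hs : s / 2 ≤ 1 / (2 * L) := by linarith [show 1 / (2 * L) = 1 / L / 2 by ring]
  have hlower := hconv.add_inner_gradient_add_sq_norm_le hdiff hLip x y
  rw [← neg_sub y x, inner_neg_right] at hlower
  calc f (y - s • gradient f y) ≤ f y - s / 2 * ‖gradient f y‖ ^ 2 :=
        apply_sub_smul_gradient_le hdiff hLip y hs0.le hLs
    _ ≤ f x + inner ℝ (gradient f y) (y - x) - s / 2 * ‖gradient f y‖ ^ 2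
          - 1 / (2 * L) * ‖gradient f x - gradient f y‖ ^ 2 := by linarith
    _ ≤ _ := by gcongr
end
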